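/- Transversal CNOT implements the logical CNOT on encoded states: let n ≡ 1 (mod 4), arrange qubits on a 2×n grid, and let W = U_1 ⊗ U_2 where U_x is the encoding unitary acting on row x. Let C_trans = ∏_{y=1}^{n} C_{(1,y)→(2,y)} be the transversal CNOT, and for a 4×4 matrix ψ on the two qubits of the first column let E₂(ψ) = ψ ⊗ (I/2)^{⊗ 2(n−1)} (the maximally mixed state on all other columns). Then for every 4×4 complex matrix ψ, C_trans · (W·E₂(ψ)·W†) · C_trans† = W·E₂(CNOT·ψ·CNOT†)·W†, where CNOT is the two-qubit controlled-NOT with control on the first qubit (the one in row 1). -/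
import Mathlib


open Matrix ComplexOrder

noncomputable section

/-- States of a `p × q` grid of qubits. -/
abbrev GState (p q : ℕ) := Fin p × Fin q → Fin 2

/-- Operators on a `p × q` grid of qubits. -/
abbrev GMat (p q : ℕ) := Matrix (GState p q) (GState p q) ℂ

/-- The CNOT gate on the grid with control qubit `c` and target qubit `t`:
the permutation matrix mapping the basis state `f` to `f` updated at `t` to
`f t + f c` (mod 2). -/
def gCNOT {p q : ℕ} (c t : Fin p × Fin q) : GMat p q :=
  fun g f => if g = Function.update f t (f t + f c) then 1 else 0

/-- The encoding unitary `U_x = (C_{(x,1)→(x,2)} ⋯ C_{(x,1)→(x,n)})·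
(C_{(x,2)→(x,1)} ⋯ C_{(x,n)→(x,1)})` acting on the first `n` columns of row `x`
(columns 1-indexed in the informal statement, 0-indexed here). -/
def rowU {p q : ℕ} (n : ℕ) (hn : 0 < n) (hnq : n ≤ q) (x : Fin p) : GMat p q :=
  (((List.range n).map fun j =>
      if hj : 0 < j ∧ j < n then
        gCNOT (x, ⟨0, lt_of_lt_of_le hn hnq⟩) (x, ⟨j, lt_of_lt_of_le hj.2 hnq⟩)
      else 1).prod) *
  (((List.range n).map fun j =>
      if hj : 0 < j ∧ j < n then
        gCNOT (x, ⟨j, lt_of_lt_of_le hj.2 hnq⟩) (x, ⟨0, lt_of_lt_of_le hn hnq⟩)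
      else 1).prod)

/-- The full encoding unitary `U = ⊗_x U_x` (identity on columns `n+1,…,q`). -/
def encU (p q n : ℕ) (hn : 0 < n) (hnq : n ≤ q) : GMat p q :=
  ((List.finRange p).map fun x => rowU n hn hnq x).prod

/-- The channel `E` which takes a density matrix `Ψ` on the `p` qubits of the first
column and returns `Ψ ⊗ (I/2)^{⊗ p(q−1)}` on the full grid, the maximally mixed state
on all other columns. -/
def Echan (p q : ℕ) (hq : 0 < q) (Ψ : Matrix (Fin p → Fin 2) (Fin p → Fin 2) ℂ) :
    GMat p q :=
  fun g f =>
    Ψ (fun x => g (x, ⟨0, hq⟩)) (fun x => f (x, ⟨0, hq⟩)) *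
      (if ∀ (x : Fin p) (y : Fin q), y ≠ ⟨0, hq⟩ → g (x, y) = f (x, y) then
        ((1 : ℂ) / 2) ^ (p * (q - 1)) else 0)

/-- For a permutation `π` of the columns, `P_π` is the unitary permutation matrix
mapping the basis state `f` to the basis state `g` with `g (x, π y) = f (x, y)`. -/
def permMat (p q : ℕ) (π : Equiv.Perm (Fin q)) : GMat p q :=
  fun g f => if ∀ (x : Fin p) (y : Fin q), g (x, π y) = f (x, y) then 1 else 0

/-- The average `(1/q!)·Σ_{π ∈ S_q} P_π ρ P_π†` of `ρ` over all column permutations. -/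
def permAvg (p q : ℕ) (ρ : GMat p q) : GMat p q :=
  ((Nat.factorial q : ℂ))⁻¹ •
    ∑ π : Equiv.Perm (Fin q), permMat p q π * ρ * (permMat p q π)ᴴ

open Kronecker

/-- The two-qubit controlled-NOT `CNOT = |0⟩⟨0| ⊗ I + |1⟩⟨1| ⊗ X`, with control on the
first qubit. -/
def CNOT4 : Matrix (Fin 2 × Fin 2) (Fin 2 × Fin 2) ℂ :=
  !![1, 0; 0, 0] ⊗ₖ (1 : Matrix (Fin 2) (Fin 2) ℂ) +
    !![0, 0; 0, 1] ⊗ₖ (!![0, 1; 1, 0] : Matrix (Fin 2) (Fin 2) ℂ)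

/-- The transversal CNOT `C_trans = ∏_{y=1}^{n} C_{(1,y)→(2,y)}` on the `2 × n` grid. -/
def transCNOT (n : ℕ) : GMat 2 n :=
  ((List.finRange n).map fun y => gCNOT ((0 : Fin 2), y) ((1 : Fin 2), y)).prod

/-- `E₂(ψ) = ψ ⊗ (I/2)^{⊗ 2(n−1)}`: the two-qubit operator `ψ` on the two qubits of the
first column, tensored with the maximally mixed state on all other columns. -/
def Echan2 (n : ℕ) (hn : 0 < n) (ψ : Matrix (Fin 2 × Fin 2) (Fin 2 × Fin 2) ℂ) :
    GMat 2 n :=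
  fun g f =>
    ψ (g (0, ⟨0, hn⟩), g (1, ⟨0, hn⟩)) (f (0, ⟨0, hn⟩), f (1, ⟨0, hn⟩)) *
      (if ∀ (x : Fin 2) (y : Fin n), y ≠ ⟨0, hn⟩ → g (x, y) = f (x, y) then
        ((1 : ℂ) / 2) ^ (2 * (n - 1)) else 0)

/-! ### Auxiliary machinery for the proof -/

section Aux

set_option linter.unusedSectionVars false
set_option linter.unnecessarySeqFocus false
set_option linter.unreachableTactic false
set_option linter.unusedTactic false
set_option linter.unusedVariables false

namespace TCLaux

variable {ι : Type*} [Fintype ι] [DecidableEq ι]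

/-- Permutation-type matrix of a self-map `e`. -/
def PMg (e : ι → ι) : Matrix ι ι ℂ := fun g f => if g = e f then 1 else 0

lemma PMg_mul (e e' : ι → ι) : PMg e * PMg e' = PMg (e ∘ e') := by
  ext g f
  simp only [Matrix.mul_apply, PMg, mul_ite, mul_one, mul_zero, ite_mul, one_mul, zero_mul,
    Function.comp_apply]
  rw [Finset.sum_ite_eq' Finset.univ (e' f) (fun k => if g = e k then (1:ℂ) else 0)]
  simp

lemma PMg_id : PMg (id : ι → ι) = 1 := by
  ext g f; simp [PMg, Matrix.one_apply, eq_comm]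

lemma PMg_conjT (e : ι → ι) (he : Function.Involutive e) : (PMg e)ᴴ = PMg e := by
  ext g f
  simp only [Matrix.conjTranspose_apply, PMg]
  have : (f = e g) ↔ (g = e f) := by
    constructor <;> intro h <;> rw [h, he]
  rw [if_congr this rfl rfl]
  split <;> simp

lemma PMg_mul_apply (e : ι → ι) (he : Function.Involutive e) (M : Matrix ι ι ℂ) (g f : ι) :
    (PMg e * M) g f = M (e g) f := by
  simp only [Matrix.mul_apply, PMg, ite_mul, one_mul, zero_mul]
  have : ∀ k, (g = e k) ↔ (e g = k) := fun k => by
    constructor <;> intro h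
    · rw [h, he]
    · rw [← h, he]
  simp only [this]
  rw [Finset.sum_ite_eq Finset.univ (e g) (fun k => M k f)]
  simp

lemma mul_PMg_conjT_apply (e : ι → ι) (he : Function.Involutive e) (M : Matrix ι ι ℂ) (g f : ι) :
    (M * (PMg e)ᴴ) g f = M g (e f) := by
  rw [PMg_conjT e he]
  simp only [Matrix.mul_apply, PMg, mul_ite, mul_one, mul_zero]
  have : ∀ k, (k = e f) ↔ (e f = k) := fun k => eq_comm
  simp only [this]
  rw [Finset.sum_ite_eq Finset.univ (e f) (fun k => M g k)]
  simp

lemma PMg_conj_apply (e : ι → ι) (he : Function.Involutive e) (M : Matrix ι ι ℂ) (g f : ι) :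
    (PMg e * M * (PMg e)ᴴ) g f = M (e g) (e f) := by
  rw [mul_PMg_conjT_apply e he, PMg_mul_apply e he]

lemma prod_map_PMg {α : Type*} (E : α → ι → ι) (l : List α) :
    (l.map fun a => PMg (E a)).prod = PMg (l.foldr (fun a g => E a ∘ g) id) := by
  induction l with
  | nil => simp [PMg_id]
  | cons a t ih => simp [ih, PMg_mul]

/-- The state map of a grid CNOT. -/
def addC {p q : ℕ} (c t : Fin p × Fin q) (f : GState p q) : GState p q :=
  Function.update f t (f t + f c)

lemma gCNOT_eq {p q : ℕ} (c t : Fin p × Fin q) : gCNOT c t = PMg (addC c t) := rfl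

/-- The state map of the transversal CNOT. -/
def cMap (n : ℕ) (f : GState 2 n) : GState 2 n :=
  fun z => if z.1 = 1 then f z + f (0, z.2) else f z

lemma foldr_addC {n : ℕ} (l : List (Fin n)) (hl : l.Nodup) (f : GState 2 n) :
    (l.foldr (fun y g => addC ((0:Fin 2), y) ((1:Fin 2), y) ∘ g) id) f =
      fun z => if z.1 = 1 ∧ z.2 ∈ l then f z + f (0, z.2) else f z := by
  induction l with
  | nil => simp
  | cons y t ih =>
    have hy : y ∉ t := (List.nodup_cons.mp hl).1
    have ht : t.Nodup := (List.nodup_cons.mp hl).2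
    funext z
    simp only [List.foldr_cons, Function.comp_apply, ih ht]
    set g : GState 2 n := fun z => if z.1 = 1 ∧ z.2 ∈ t then f z + f (0, z.2) else f z with hg
    show addC ((0:Fin 2), y) ((1:Fin 2), y) g z = _
    have h0 : g ((0:Fin 2), y) = f (0, y) := by simp [hg]
    have h1 : g ((1:Fin 2), y) = f (1, y) := by simp [hg, hy]
    rcases z with ⟨zx, zy⟩
    by_cases hzz : ((zx, zy) : Fin 2 × Fin n) = ((1:Fin 2), y)
    · rw [hzz]
      simp only [addC, Function.update_self, h0, h1, List.mem_cons]
      simp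
    · simp only [addC, Function.update_of_ne hzz, hg]
      have : (zx = 1 ∧ zy ∈ y :: t) ↔ (zx = 1 ∧ zy ∈ t) := by
        constructor
        · rintro ⟨h1', h2⟩
          refine ⟨h1', ?_⟩
          rcases List.mem_cons.mp h2 with h | h
          · exact absurd (by rw [h1', h]) hzz
          · exact h
        · rintro ⟨h1', h2⟩; exact ⟨h1', List.mem_cons_of_mem _ h2⟩
      rw [if_congr this rfl rfl]

lemma transCNOT_eq (n : ℕ) : transCNOT n = PMg (cMap n) := by
  unfold transCNOT
  simp only [gCNOT_eq]
  rw [prod_map_PMg]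
  have : (List.finRange n).foldr (fun y g => addC ((0:Fin 2), y) ((1:Fin 2), y) ∘ g) id
      = cMap n := by
    funext f
    rw [foldr_addC _ (List.nodup_finRange n)]
    funext z
    simp [cMap, List.mem_finRange]
  rw [this]

variable {p n : ℕ}

/-- State map after the A-part up to `k`: columns `1..k-1` of row `x` get `+ f (x,0)`. -/
def aMap (hn : 0 < n) (x : Fin p) (k : ℕ) (f : GState p n) : GState p n :=
  fun z => if z.1 = x ∧ 0 < z.2.val ∧ z.2.val < k then f z + f (x, ⟨0, hn⟩) else f z

/-- State map after the B-part up to `k`: column 0 of row `x` gets `+ Σ_{0<j<k} f (x,j)`. -/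
def bMap (hn : 0 < n) (x : Fin p) (k : ℕ) (f : GState p n) : GState p n :=
  fun z => if z = (x, ⟨0, hn⟩) then
      f z + ∑ j : Fin n, (if 0 < j.val ∧ j.val < k then f (x, j) else 0)
    else f z

lemma aProd (hn : 0 < n) (x : Fin p) (k : ℕ) (hk : k ≤ n) :
    (((List.range k).map fun j =>
      if hj : 0 < j ∧ j < n then
        gCNOT (x, ⟨0, hn⟩) (x, ⟨j, hj.2⟩)
      else 1).prod) = PMg (aMap hn x k) := by
  induction k with
  | zero =>
    simp only [List.range_zero, List.map_nil, List.prod_nil]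
    rw [show aMap hn x 0 = id from ?_, PMg_id]
    funext f z; simp [aMap]
  | succ k ih =>
    rw [List.range_succ, List.map_append, List.prod_append]
    rw [ih (le_of_lt (Nat.lt_of_succ_le hk))]
    simp only [List.map_cons, List.map_nil, List.prod_cons, List.prod_nil, mul_one]
    by_cases hk0 : 0 < k
    · rw [dif_pos ⟨hk0, Nat.lt_of_succ_le hk⟩, gCNOT_eq, PMg_mul]
      refine congrArg PMg ?_
      funext f z
      simp only [Function.comp_apply, aMap, addC]
      rcases z with ⟨zx, zy⟩
      have hkn : (⟨k, Nat.lt_of_succ_le hk⟩ : Fin n) ≠ ⟨0, hn⟩ := by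
        simp [Fin.ext_iff]; omega
      have h0 : Function.update f (x, (⟨k, Nat.lt_of_succ_le hk⟩ : Fin n))
          (f (x, ⟨k, Nat.lt_of_succ_le hk⟩) + f (x, ⟨0, hn⟩)) (x, ⟨0, hn⟩) = f (x, ⟨0, hn⟩) := by
        apply Function.update_of_ne
        simp [Prod.ext_iff, Fin.ext_iff]; omega
      by_cases hz : ((zx, zy) : Fin p × Fin n) = (x, ⟨k, Nat.lt_of_succ_le hk⟩)
      · rw [hz]
        simp only [Function.update_self, h0]
        rw [if_neg (by simp)]
        simp [hk0]
      · rw [Function.update_of_ne hz, h0]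
        have : (zx = x ∧ 0 < zy.val ∧ zy.val < k + 1) ↔ (zx = x ∧ 0 < zy.val ∧ zy.val < k) := by
          constructor
          · rintro ⟨h1, h2, h3⟩
            refine ⟨h1, h2, ?_⟩
            rcases Nat.lt_succ_iff_lt_or_eq.mp h3 with h | h
            · exact h
            · exact absurd (by simp [Prod.ext_iff, h1, Fin.ext_iff, h]) hz
          · rintro ⟨h1, h2, h3⟩; exact ⟨h1, h2, Nat.lt_succ_of_lt h3⟩
        rw [if_congr this rfl rfl]
    · have : k = 0 := by omega
      subst this
      rw [dif_neg (by simp)]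
      rw [mul_one]
      refine congrArg PMg ?_
      funext f z
      simp only [aMap]
      have : (z.1 = x ∧ 0 < z.2.val ∧ z.2.val < 1) ↔ (z.1 = x ∧ 0 < z.2.val ∧ z.2.val < 0) := by
        omega
      rw [if_congr this rfl rfl]

lemma bProd (hn : 0 < n) (x : Fin p) (k : ℕ) (hk : k ≤ n) :
    (((List.range k).map fun j =>
      if hj : 0 < j ∧ j < n then
        gCNOT (x, ⟨j, hj.2⟩) (x, ⟨0, hn⟩)
      else 1).prod) = PMg (bMap hn x k) := by
  induction k with
  | zero =>
    simp only [List.range_zero, List.map_nil, List.prod_nil]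
    rw [show bMap hn x 0 = id from ?_, PMg_id]
    funext f z; simp [bMap]
  | succ k ih =>
    rw [List.range_succ, List.map_append, List.prod_append]
    rw [ih (le_of_lt (Nat.lt_of_succ_le hk))]
    simp only [List.map_cons, List.map_nil, List.prod_cons, List.prod_nil, mul_one]
    by_cases hk0 : 0 < k
    · rw [dif_pos ⟨hk0, Nat.lt_of_succ_le hk⟩, gCNOT_eq, PMg_mul]
      refine congrArg PMg ?_
      funext f z
      simp only [Function.comp_apply, bMap, addC]
      set kk : Fin n := ⟨k, Nat.lt_of_succ_le hk⟩ with hkk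
      have hkval : kk.val = k := rfl
      have hkn : kk ≠ (⟨0, hn⟩ : Fin n) := by
        simp [hkk, Fin.ext_iff]; omega
      set g := Function.update f (x, (⟨0, hn⟩ : Fin n)) (f (x, ⟨0, hn⟩) + f (x, kk)) with hg
      have hgj : ∀ j : Fin n, 0 < j.val → g (x, j) = f (x, j) := by
        intro j hj
        apply Function.update_of_ne
        simp [Prod.ext_iff, Fin.ext_iff]
        intro _; omega
      by_cases hz : z = (x, (⟨0, hn⟩ : Fin n))
      · rw [hz, if_pos rfl, if_pos rfl]
        have hgz : g (x, (⟨0, hn⟩ : Fin n)) = f (x, ⟨0, hn⟩) + f (x, kk) := by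
          rw [hg, Function.update_self]
        rw [hgz]
        have hsum : ∀ m : ℕ, m ≤ n →
            ∑ j : Fin n, (if 0 < j.val ∧ j.val < m then g (x, j) else 0) =
            ∑ j : Fin n, (if 0 < j.val ∧ j.val < m then f (x, j) else 0) := by
          intro m _
          apply Finset.sum_congr rfl
          intro j _
          by_cases hj : 0 < j.val ∧ j.val < m
          · rw [if_pos hj, if_pos hj, hgj j hj.1]
          · rw [if_neg hj, if_neg hj]
        rw [hsum k (le_of_lt (Nat.lt_of_succ_le hk))]
        have hsplit : ∑ j : Fin n, (if 0 < j.val ∧ j.val < k + 1 then f (x, j) else 0) =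
            (∑ j : Fin n, (if 0 < j.val ∧ j.val < k then f (x, j) else 0)) + f (x, kk) := by
          have : ∀ j : Fin n, (if 0 < j.val ∧ j.val < k + 1 then f (x, j) else 0) =
              (if 0 < j.val ∧ j.val < k then f (x, j) else 0) +
              (if j = kk then f (x, j) else 0) := by
            intro j
            by_cases hjk : j = kk
            · subst hjk
              rw [if_pos rfl, if_pos (by simp only [hkval]; omega),
                if_neg (by simp only [hkval]; omega)]
              rw [zero_add]
            · have hjk' : j.val ≠ kk.val := fun h => hjk (Fin.ext h)
              rw [hkval] at hjk'
              rw [if_neg hjk]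
              have : (0 < j.val ∧ j.val < k + 1) ↔ (0 < j.val ∧ j.val < k) := by omega
              rw [if_congr this rfl rfl, add_zero]
          rw [Finset.sum_congr rfl fun j _ => this j, Finset.sum_add_distrib]
          congr 1
          rw [Finset.sum_ite_eq' Finset.univ kk (fun j => f (x, j))]
          simp
        rw [hsplit, add_assoc, add_comm (f (x, kk))]
      · rw [if_neg hz, if_neg hz, hg, Function.update_of_ne hz]
    · have : k = 0 := by omega
      subst this
      rw [dif_neg (by simp), mul_one]
      refine congrArg PMg ?_
      funext f z
      simp only [bMap]
      have h1 : ∀ j : Fin n, (0 < j.val ∧ j.val < 1) = False := by intro j; simp; omega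
      have h0 : ∀ j : Fin n, (0 < j.val ∧ j.val < 0) = False := by intro j; simp
      simp only [h1, h0, if_false, Finset.sum_const_zero]

/-- The state map of `U_x` (on a square grid). -/
def rowMap (hn : 0 < n) (x : Fin p) (f : GState p n) : GState p n :=
  fun z => if z.1 = x then
      (if z.2 = ⟨0, hn⟩ then ∑ j : Fin n, f (x, j) else f z + ∑ j : Fin n, f (x, j))
    else f z

lemma sum_row_split (hn : 0 < n) (x : Fin p) (f : GState p n) :
    ∑ j : Fin n, f (x, j) =
      f (x, ⟨0, hn⟩) + ∑ j : Fin n, (if 0 < j.val ∧ j.val < n then f (x, j) else 0) := by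
  have : ∀ j : Fin n, f (x, j) =
      (if j = (⟨0, hn⟩ : Fin n) then f (x, j) else 0) +
      (if 0 < j.val ∧ j.val < n then f (x, j) else 0) := by
    intro j
    by_cases hj : j = (⟨0, hn⟩ : Fin n)
    · rw [if_pos hj, if_neg (by simp [hj]), add_zero]
    · have : 0 < j.val := Nat.pos_of_ne_zero (fun h => hj (Fin.ext h))
      rw [if_neg hj, if_pos ⟨this, j.isLt⟩, zero_add]
  rw [Finset.sum_congr rfl fun j _ => this j, Finset.sum_add_distrib]
  congr 1
  rw [Finset.sum_ite_eq' Finset.univ (⟨0, hn⟩ : Fin n) (fun j => f (x, j))]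
  simp

lemma aMap_comp_bMap (hn : 0 < n) (x : Fin p) :
    aMap hn x n ∘ bMap hn x n = rowMap hn x := by
  funext f z
  simp only [Function.comp_apply, aMap, bMap, rowMap]
  by_cases hzx : z.1 = x
  · by_cases hzy : z.2 = (⟨0, hn⟩ : Fin n)
    · have hz : z = (x, (⟨0, hn⟩ : Fin n)) := Prod.ext hzx hzy
      have hcond : ¬(z.1 = x ∧ 0 < z.2.val ∧ z.2.val < n) := by
        rintro ⟨-, h, -⟩; rw [hzy] at h; simp at h
      rw [if_neg hcond, if_pos hz, if_pos hzx, if_pos hzy, hz, sum_row_split hn x f]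
    · have h2 : 0 < z.2.val := Nat.pos_of_ne_zero (fun h => hzy (Fin.ext h))
      have hz : z ≠ (x, (⟨0, hn⟩ : Fin n)) := by
        intro h; exact hzy (by rw [h])
      rw [if_pos ⟨hzx, h2, z.2.isLt⟩, if_neg hz]
      rw [if_pos hzx, if_neg hzy, sum_row_split hn x f]
      simp only [if_true]
  · have hz : z ≠ (x, (⟨0, hn⟩ : Fin n)) := fun h => hzx (by rw [h])
    have hcond : ¬(z.1 = x ∧ 0 < z.2.val ∧ z.2.val < n) := fun h => hzx h.1
    rw [if_neg hcond, if_neg hz, if_neg hzx]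

lemma rowU_eq (hn : 0 < n) (x : Fin p) :
    rowU n hn le_rfl x = PMg (rowMap hn x) := by
  have ha := aProd hn x n le_rfl
  have hb := bProd hn x n le_rfl
  show _ * _ = _
  calc rowU n hn le_rfl x
      = PMg (aMap hn x n) * PMg (bMap hn x n) := by
        unfold rowU; exact congrArg₂ (· * ·) ha hb
    _ = PMg (aMap hn x n ∘ bMap hn x n) := PMg_mul _ _
    _ = PMg (rowMap hn x) := by rw [aMap_comp_bMap]

/-- The state map of `U_0 · U_1` on the `2 × n` grid. -/
def uMap (n : ℕ) (hn : 0 < n) (f : GState 2 n) : GState 2 n :=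
  fun z => if z.2 = ⟨0, hn⟩ then ∑ j : Fin n, f (z.1, j) else f z + ∑ j : Fin n, f (z.1, j)

lemma fin2_cases (a : Fin 2) : a = 0 ∨ a = 1 := by omega

lemma cMap_apply0 {n : ℕ} (f : GState 2 n) (y : Fin n) : cMap n f (0, y) = f (0, y) := by
  simp [cMap]

lemma cMap_apply1 {n : ℕ} (f : GState 2 n) (y : Fin n) :
    cMap n f (1, y) = f (1, y) + f (0, y) := by
  simp [cMap]

lemma rowMap_comp (n : ℕ) (hn : 0 < n) :
    rowMap (p := 2) hn 0 ∘ rowMap hn 1 = uMap n hn := by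
  funext f z
  rcases z with ⟨zx, zy⟩
  rcases fin2_cases zx with rfl | rfl
  · by_cases hzy : zy = (⟨0, hn⟩ : Fin n) <;>
      simp [Function.comp_apply, rowMap, uMap, hzy]
  · by_cases hzy : zy = (⟨0, hn⟩ : Fin n) <;>
      simp [Function.comp_apply, rowMap, uMap, hzy]

lemma cMap_involutive (n : ℕ) : Function.Involutive (cMap n) := by
  intro f
  funext z
  rcases z with ⟨zx, zy⟩
  have key : ∀ a b : Fin 2, a + b + b = a := by decide
  rcases fin2_cases zx with rfl | rfl
  · rw [cMap_apply0, cMap_apply0]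
  · rw [cMap_apply1, cMap_apply1, cMap_apply0]
    exact key _ _

lemma cMap_uMap_comm (n : ℕ) (hn : 0 < n) :
    cMap n ∘ uMap n hn = uMap n hn ∘ cMap n := by
  funext f z
  rcases z with ⟨zx, zy⟩
  rcases fin2_cases zx with rfl | rfl
  · simp only [Function.comp_apply, cMap_apply0]
    by_cases hzy : zy = (⟨0, hn⟩ : Fin n) <;>
      simp [uMap, hzy, cMap_apply0]
  · simp only [Function.comp_apply, cMap_apply1]
    by_cases hzy : zy = (⟨0, hn⟩ : Fin n) <;>
      simp [uMap, hzy, cMap_apply0, cMap_apply1, Finset.sum_add_distrib] <;>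
      abel

/-- State map of the two-qubit CNOT. -/
def cnotF (a : Fin 2 × Fin 2) : Fin 2 × Fin 2 := (a.1, a.2 + a.1)

lemma cnotF_involutive : Function.Involutive cnotF := by
  intro a; rcases a with ⟨a1, a2⟩; revert a1 a2; decide

lemma CNOT4_eq : CNOT4 = PMg cnotF := by
  ext a b
  rcases a with ⟨a1, a2⟩
  rcases b with ⟨b1, b2⟩
  rcases fin2_cases a1 with rfl | rfl <;> rcases fin2_cases a2 with rfl | rfl <;>
    rcases fin2_cases b1 with rfl | rfl <;> rcases fin2_cases b2 with rfl | rfl <;>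
    simp [CNOT4, PMg, cnotF, Matrix.add_apply, Matrix.kroneckerMap_apply, Matrix.one_apply,
      Prod.ext_iff] <;> decide

lemma CNOT4_conj_apply (ψ : Matrix (Fin 2 × Fin 2) (Fin 2 × Fin 2) ℂ) (a b : Fin 2 × Fin 2) :
    (CNOT4 * ψ * CNOT4ᴴ) a b = ψ (cnotF a) (cnotF b) := by
  rw [CNOT4_eq]
  exact PMg_conj_apply cnotF cnotF_involutive ψ a b

lemma cMap_cond_iff (n : ℕ) (hn : 0 < n) (g f : GState 2 n) :
    (∀ (x : Fin 2) (y : Fin n), y ≠ ⟨0, hn⟩ → cMap n g (x, y) = cMap n f (x, y)) ↔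
    (∀ (x : Fin 2) (y : Fin n), y ≠ ⟨0, hn⟩ → g (x, y) = f (x, y)) := by
  constructor
  · intro h x y hy
    have h0 : g ((0 : Fin 2), y) = f (0, y) := by
      have := h 0 y hy; rwa [cMap_apply0, cMap_apply0] at this
    rcases fin2_cases x with rfl | rfl
    · exact h0
    · have := h 1 y hy
      rw [cMap_apply1, cMap_apply1, h0] at this
      exact add_right_cancel this
  · intro h x y hy
    rcases fin2_cases x with rfl | rfl
    · rw [cMap_apply0, cMap_apply0]; exact h 0 y hy
    · rw [cMap_apply1, cMap_apply1, h 0 y hy, h 1 y hy]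

lemma conj_Echan2 (n : ℕ) (hn : 0 < n) (ψ : Matrix (Fin 2 × Fin 2) (Fin 2 × Fin 2) ℂ) :
    transCNOT n * Echan2 n hn ψ * (transCNOT n)ᴴ = Echan2 n hn (CNOT4 * ψ * CNOT4ᴴ) := by
  rw [transCNOT_eq]
  ext g f
  rw [PMg_conj_apply (cMap n) (cMap_involutive n)]
  simp only [Echan2, CNOT4_conj_apply]
  rw [cMap_apply0, cMap_apply1, cMap_apply0, cMap_apply1]
  congr 1
  rw [if_congr (cMap_cond_iff n hn g f) rfl rfl]

end TCLaux

end Aux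

/-- **Transversal CNOT implements the logical CNOT on encoded states.**
Let `n ≡ 1 (mod 4)`, arrange qubits on a `2 × n` grid, and let `W = U_1 ⊗ U_2` where
`U_x` is the encoding unitary acting on row `x`. Then for every 4×4 complex matrix `ψ`,
`C_trans · (W·E₂(ψ)·W†) · C_trans† = W·E₂(CNOT·ψ·CNOT†)·W†`. -/
theorem transversal_cnot_logical (n : ℕ) (hn : 0 < n) (h4 : n % 4 = 1)
    (ψ : Matrix (Fin 2 × Fin 2) (Fin 2 × Fin 2) ℂ) :
    transCNOT n *
        ((rowU n hn le_rfl (0 : Fin 2) * rowU n hn le_rfl (1 : Fin 2)) *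
          Echan2 n hn ψ *
          (rowU n hn le_rfl (0 : Fin 2) * rowU n hn le_rfl (1 : Fin 2))ᴴ) *
        (transCNOT n)ᴴ =
      (rowU n hn le_rfl (0 : Fin 2) * rowU n hn le_rfl (1 : Fin 2)) *
        Echan2 n hn (CNOT4 * ψ * CNOT4ᴴ) *
        (rowU n hn le_rfl (0 : Fin 2) * rowU n hn le_rfl (1 : Fin 2))ᴴ := by
  open TCLaux in
  set C := transCNOT n with hCdef
  set W := rowU n hn le_rfl (0 : Fin 2) * rowU n hn le_rfl (1 : Fin 2) with hWdef
  have hC : C = PMg (cMap n) := transCNOT_eq n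
  have hW : W = PMg (uMap n hn) := by
    rw [hWdef, rowU_eq hn (0 : Fin 2), rowU_eq hn (1 : Fin 2), PMg_mul, rowMap_comp n hn]
  have hcomm : C * W = W * C := by
    rw [hC, hW, PMg_mul, PMg_mul, cMap_uMap_comm n hn]
  have hcommH : Wᴴ * Cᴴ = Cᴴ * Wᴴ := by
    rw [← Matrix.conjTranspose_mul, ← Matrix.conjTranspose_mul, hcomm]
  calc C * (W * Echan2 n hn ψ * Wᴴ) * Cᴴ
      = (C * W) * Echan2 n hn ψ * (Wᴴ * Cᴴ) := by
        simp only [Matrix.mul_assoc]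
    _ = (W * C) * Echan2 n hn ψ * (Cᴴ * Wᴴ) := by rw [hcomm, hcommH]
    _ = W * (C * Echan2 n hn ψ * Cᴴ) * Wᴴ := by
        simp only [Matrix.mul_assoc]
    _ = W * Echan2 n hn (CNOT4 * ψ * CNOT4ᴴ) * Wᴴ := by
        rw [hCdef, conj_Echan2 n hn ψ]

end
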